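/- For every attribute c ∈ C: c belongs to every (α,β) lower distribution reduct of C (i.e., c lies in the (α,β) lower distribution core) if and only if η_{C∖{c}} ≠ η_C. -/
import Mathlib


/-- The indiscernibility class `[x]_R` of `x` for the attribute subset `R`:
all objects agreeing with `x` on every attribute in `R`. -/
def cls {U V A : Type*} (f : A → U → V) (R : Finset A) (x : U) : Set U :=
  {y | ∀ a ∈ R, f a x = f a y}

/-- Classical lower approximation of `X` with respect to `IND(R)`. -/
def lowerA {U V A : Type*} (f : A → U → V) (R : Finset A) (X : Set U) : Set U :=
  {x | cls f R x ⊆ X}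

/-- Classical upper approximation of `X` with respect to `IND(R)`. -/
def upperA {U V A : Type*} (f : A → U → V) (R : Finset A) (X : Set U) : Set U :=
  {x | (cls f R x ∩ X).Nonempty}

/-- α-probabilistic lower approximation: `{x | |[x]_R ∩ X| ≥ α·|[x]_R|}`. -/
noncomputable def aprLow {U V A : Type*} (f : A → U → V) (R : Finset A) (α : ℝ)
    (X : Set U) : Set U :=
  {x | α * ((cls f R x).ncard : ℝ) ≤ (((cls f R x) ∩ X).ncard : ℝ)}

/-- β-probabilistic upper approximation: `{x | |[x]_R ∩ X| > β·|[x]_R|}`. -/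
noncomputable def aprUp {U V A : Type*} (f : A → U → V) (R : Finset A) (β : ℝ)
    (X : Set U) : Set U :=
  {x | β * ((cls f R x).ncard : ℝ) < (((cls f R x) ∩ X).ncard : ℝ)}

/-- `η_R = (Σ_{i=1}^M |lower_R(apr_C^α(Y_i))|)/(|U|·M)`, the sum running over the
decision classes `Y_i = d⁻¹(v)`, `v ∈ d(U)`. -/
noncomputable def eta {U V A : Type*} [Fintype U] [DecidableEq V] (f : A → U → V)
    (C : Finset A) (d : U → V) (α : ℝ) (R : Finset A) : ℝ :=
  (∑ v ∈ Finset.univ.image d,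
      ((lowerA f R (aprLow f C α (d ⁻¹' {v}))).ncard : ℝ)) /
    ((Fintype.card U : ℝ) * ((Finset.univ.image d).card : ℝ))

/-- `μ_R = (Σ_{i=1}^M |upper_R(Apr_C^β(Y_i))|)/(|U|·M)`, the sum running over the
decision classes `Y_i = d⁻¹(v)`, `v ∈ d(U)`. -/
noncomputable def mu {U V A : Type*} [Fintype U] [DecidableEq V] (f : A → U → V)
    (C : Finset A) (d : U → V) (β : ℝ) (R : Finset A) : ℝ :=
  (∑ v ∈ Finset.univ.image d,
      ((upperA f R (aprUp f C β (d ⁻¹' {v}))).ncard : ℝ)) /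
    ((Fintype.card U : ℝ) * ((Finset.univ.image d).card : ℝ))

/-- `R` is an (α,β) lower distribution consistent set:
`apr_R^α(Y_i) = apr_C^α(Y_i)` for every decision class `Y_i`. -/
def LowerConsistent {U V A : Type*} [Fintype U] [DecidableEq V] (f : A → U → V)
    (C : Finset A) (d : U → V) (α : ℝ) (R : Finset A) : Prop :=
  ∀ v ∈ Finset.univ.image d, aprLow f R α (d ⁻¹' {v}) = aprLow f C α (d ⁻¹' {v})

/-- `R` is an (α,β) upper distribution consistent set:
`Apr_R^β(Y_i) = Apr_C^β(Y_i)` for every decision class `Y_i`. -/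
def UpperConsistent {U V A : Type*} [Fintype U] [DecidableEq V] (f : A → U → V)
    (C : Finset A) (d : U → V) (β : ℝ) (R : Finset A) : Prop :=
  ∀ v ∈ Finset.univ.image d, aprUp f R β (d ⁻¹' {v}) = aprUp f C β (d ⁻¹' {v})

/-- `R` is an (α,β) lower distribution reduct: a lower distribution consistent set
no proper subset of which is lower distribution consistent. -/
def LowerReduct {U V A : Type*} [Fintype U] [DecidableEq V] (f : A → U → V)
    (C : Finset A) (d : U → V) (α : ℝ) (R : Finset A) : Prop :=
  LowerConsistent f C d α R ∧ ∀ R' ⊂ R, ¬ LowerConsistent f C d α R'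

/-- `R` is an (α,β) upper distribution reduct: an upper distribution consistent set
no proper subset of which is upper distribution consistent. -/
def UpperReduct {U V A : Type*} [Fintype U] [DecidableEq V] (f : A → U → V)
    (C : Finset A) (d : U → V) (β : ℝ) (R : Finset A) : Prop :=
  UpperConsistent f C d β R ∧ ∀ R' ⊂ R, ¬ UpperConsistent f C d β R'

section Aux

variable {U V A : Type*} [Fintype U] [DecidableEq V]

lemma mem_cls_self (f : A → U → V) (R : Finset A) (x : U) : x ∈ cls f R x :=
  fun _ _ => rfl

lemma cls_eq_of_mem {f : A → U → V} {R : Finset A} {x y : U} (h : y ∈ cls f R x) :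
    cls f R y = cls f R x := by
  ext z
  constructor <;> intro hz a ha
  · exact (h a ha).trans (hz a ha)
  · exact (h a ha).symm.trans (hz a ha)

lemma cls_anti {f : A → U → V} {R S : Finset A} (h : R ⊆ S) (x : U) :
    cls f S x ⊆ cls f R x := fun _ hy a ha => hy a (h ha)

lemma lowerA_mono {f : A → U → V} {R S : Finset A} (h : R ⊆ S) (X : Set U) :
    lowerA f R X ⊆ lowerA f S X := fun _ hx => (cls_anti h _).trans hx

lemma lowerA_aprLow_self (f : A → U → V) (Cc : Finset A) (α : ℝ) (X : Set U) :
    lowerA f Cc (aprLow f Cc α X) = aprLow f Cc α X := by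
  ext x
  constructor
  · intro hx
    exact hx (mem_cls_self f Cc x)
  · intro hx y hy
    show α * _ ≤ _
    rw [cls_eq_of_mem hy]
    exact hx

/-- Partition of an `R`-class into `C`-classes (via representatives), with the
corresponding decompositions of cardinalities. -/
lemma cls_partition {f : A → U → V} {R C : Finset A} (hRC : R ⊆ C) (x : U) (X : Set U) :
    ∃ s : Finset U, s.Nonempty ∧ (∀ z ∈ s, z ∈ cls f R x) ∧
      ((cls f R x).ncard = ∑ z ∈ s, (cls f C z).ncard) ∧
      ((cls f R x ∩ X).ncard = ∑ z ∈ s, (cls f C z ∩ X).ncard) := by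
  classical
  set g : U → (↥C → V) := fun u a => f a.1 u with hg
  have hgcls : ∀ z y : U, g y = g z ↔ y ∈ cls f C z := by
    intro z y
    constructor
    · intro h a ha
      exact (congrFun h ⟨a, ha⟩).symm
    · intro h
      funext a
      exact (h a.1 a.2).symm
  set T : Finset U := Set.toFinset (cls f R x) with hT
  set K : Finset (↥C → V) := T.image g with hK
  set rep : (↥C → V) → U := fun k => if h : ∃ z, z ∈ T ∧ g z = k then h.choose else x
    with hrepdef
  have hrepP : ∀ k ∈ K, rep k ∈ T ∧ g (rep k) = k := by
    intro k hk
    have h : ∃ z, z ∈ T ∧ g z = k := by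
      simpa [hK, Finset.mem_image] using hk
    simp only [hrepdef, dif_pos h]
    exact h.choose_spec
  have key : ∀ k ∈ K, ∀ y : U, (y ∈ cls f R x ∧ g y = k) ↔ y ∈ cls f C (rep k) := by
    intro k hk y
    obtain ⟨hkT, hkg⟩ := hrepP k hk
    have hrepR : rep k ∈ cls f R x := Set.mem_toFinset.mp hkT
    constructor
    · rintro ⟨_, hy⟩
      exact (hgcls (rep k) y).mp (by rw [hy, hkg])
    · intro hy
      have h1 : y ∈ cls f R (rep k) := cls_anti hRC _ hy
      rw [cls_eq_of_mem hrepR] at h1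
      exact ⟨h1, ((hgcls (rep k) y).mpr hy).trans hkg⟩
  have hTcard : T.card = ∑ k ∈ K, (T.filter (fun z => g z = k)).card :=
    Finset.card_eq_sum_card_fiberwise (fun z hz => Finset.mem_image_of_mem g hz)
  set TX : Finset U := Set.toFinset (cls f R x ∩ X) with hTX
  have hTXcard : TX.card = ∑ k ∈ K, (TX.filter (fun z => g z = k)).card := by
    apply Finset.card_eq_sum_card_fiberwise
    intro z hz
    have hz' : z ∈ cls f R x := (Set.mem_toFinset.mp hz).1
    exact Finset.mem_image_of_mem g (Set.mem_toFinset.mpr hz')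
  have hfib1 : ∀ k ∈ K, (T.filter (fun z => g z = k)) = Set.toFinset (cls f C (rep k)) := by
    intro k hk
    ext y
    simp only [Finset.mem_filter, Set.mem_toFinset, hT]
    exact key k hk y
  have hfib2 : ∀ k ∈ K,
      (TX.filter (fun z => g z = k)) = Set.toFinset (cls f C (rep k) ∩ X) := by
    intro k hk
    ext y
    simp only [Finset.mem_filter, Set.mem_toFinset, hTX, Set.mem_inter_iff]
    constructor
    · rintro ⟨⟨h1, h2⟩, h3⟩
      exact ⟨(key k hk y).mp ⟨h1, h3⟩, h2⟩
    · rintro ⟨h1, h2⟩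
      obtain ⟨ha, hb⟩ := (key k hk y).mpr h1
      exact ⟨⟨ha, h2⟩, hb⟩
  have hinj : ∀ k1 ∈ K, ∀ k2 ∈ K, rep k1 = rep k2 → k1 = k2 := by
    intro k1 h1 k2 h2 h
    rw [← (hrepP k1 h1).2, ← (hrepP k2 h2).2, h]
  refine ⟨K.image rep, ?_, ?_, ?_, ?_⟩
  · have hxT : x ∈ T := Set.mem_toFinset.mpr (mem_cls_self f R x)
    exact ⟨rep (g x), Finset.mem_image_of_mem rep (Finset.mem_image_of_mem g hxT)⟩
  · intro z hz
    obtain ⟨k, hk, hkz⟩ := Finset.mem_image.mp hz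
    have h := (hrepP k hk).1
    rw [hkz] at h
    exact Set.mem_toFinset.mp h
  · rw [Set.ncard_eq_toFinset_card', ← hT, hTcard, Finset.sum_image hinj]
    refine Finset.sum_congr rfl (fun k hk => ?_)
    rw [hfib1 k hk, ← Set.ncard_eq_toFinset_card']
  · rw [Set.ncard_eq_toFinset_card', ← hTX, hTXcard, Finset.sum_image hinj]
    refine Finset.sum_congr rfl (fun k hk => ?_)
    rw [hfib2 k hk, ← Set.ncard_eq_toFinset_card']

lemma exists_aprLow_rep {f : A → U → V} {R C : Finset A} (hRC : R ⊆ C) {α : ℝ}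
    (hα : 0 < α) {X : Set U} {x : U} (hx : x ∈ aprLow f R α X) :
    ∃ z ∈ cls f R x, z ∈ aprLow f C α X := by
  by_contra hcon
  push_neg at hcon
  obtain ⟨s, hsne, hsmem, h1, h2⟩ := cls_partition (f := f) hRC x X
  have hlt : ∀ z ∈ s, (((cls f C z) ∩ X).ncard : ℝ) < α * (cls f C z).ncard := by
    intro z hz
    have h := hcon z (hsmem z hz)
    simpa [aprLow, not_le] using h
  have hbig : ((cls f R x ∩ X).ncard : ℝ) < α * (cls f R x).ncard := by
    rw [h1, h2]
    push_cast
    calc (∑ z ∈ s, (((cls f C z) ∩ X).ncard : ℝ))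
        < ∑ z ∈ s, α * ((cls f C z).ncard : ℝ) :=
          Finset.sum_lt_sum_of_nonempty hsne hlt
      _ = α * ∑ z ∈ s, ((cls f C z).ncard : ℝ) := (Finset.mul_sum _ _ _).symm
  exact absurd hx (by simpa [aprLow, not_le] using hbig)

lemma mem_aprLow_of_cls_subset {f : A → U → V} {R C : Finset A} (hRC : R ⊆ C)
    {α : ℝ} {X : Set U} {x : U} (h : cls f R x ⊆ aprLow f C α X) :
    x ∈ aprLow f R α X := by
  obtain ⟨s, hsne, hsmem, h1, h2⟩ := cls_partition (f := f) hRC x X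
  show α * _ ≤ _
  rw [h1, h2]
  push_cast
  rw [Finset.mul_sum]
  exact Finset.sum_le_sum (fun z hz => h (hsmem z hz))

lemma lowerConsistent_iff {f : A → U → V} {C : Finset A} {d : U → V} {α : ℝ}
    (hα : 0 < α) {R : Finset A} (hRC : R ⊆ C) :
    LowerConsistent f C d α R ↔
      ∀ v ∈ Finset.univ.image d,
        lowerA f R (aprLow f C α (d ⁻¹' {v})) = aprLow f C α (d ⁻¹' {v}) := by
  constructor
  · intro h v hv
    rw [← h v hv, lowerA_aprLow_self]
  · intro h v hv
    ext x
    constructor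
    · intro hx
      obtain ⟨z, hzR, hzC⟩ := exists_aprLow_rep hRC hα hx
      rw [← h v hv] at hzC
      have hsub : cls f R z ⊆ aprLow f C α (d ⁻¹' {v}) := hzC
      rw [cls_eq_of_mem hzR] at hsub
      exact hsub (mem_cls_self f R x)
    · intro hx
      have hsub : cls f R x ⊆ aprLow f C α (d ⁻¹' {v}) := by
        rw [← h v hv] at hx
        exact hx
      exact mem_aprLow_of_cls_subset hRC hsub

lemma eta_eq_iff [Nonempty U] {f : A → U → V} {C : Finset A} {d : U → V} {α : ℝ}
    {R : Finset A} (hRC : R ⊆ C) :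
    eta f C d α R = eta f C d α C ↔
      ∀ v ∈ Finset.univ.image d,
        lowerA f R (aprLow f C α (d ⁻¹' {v})) = aprLow f C α (d ⁻¹' {v}) := by
  have hden : (0 : ℝ) < (Fintype.card U : ℝ) * ((Finset.univ.image d).card : ℝ) := by
    apply mul_pos
    · exact_mod_cast Fintype.card_pos
    · exact_mod_cast Finset.card_pos.mpr (Finset.univ_nonempty.image d)
  have hsub : ∀ v ∈ Finset.univ.image d,
      lowerA f R (aprLow f C α (d ⁻¹' {v})) ⊆ aprLow f C α (d ⁻¹' {v}) := by
    intro v hv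
    exact (lowerA_mono hRC _).trans (lowerA_aprLow_self f C α _).subset
  unfold eta
  rw [div_eq_div_iff hden.ne' hden.ne', mul_left_inj' hden.ne']
  have hrw : (∑ v ∈ Finset.univ.image d,
      ((lowerA f C (aprLow f C α (d ⁻¹' {v}))).ncard : ℝ)) =
      ∑ v ∈ Finset.univ.image d, ((aprLow f C α (d ⁻¹' {v})).ncard : ℝ) :=
    Finset.sum_congr rfl (fun v _ => by rw [lowerA_aprLow_self])
  rw [hrw]
  rw [Finset.sum_eq_sum_iff_of_le (fun v hv => by
    exact_mod_cast Set.ncard_le_ncard (hsub v hv) (Set.toFinite _))]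
  constructor
  · intro h v hv
    have h' := h v hv
    refine Set.eq_of_subset_of_ncard_le (hsub v hv) ?_ (Set.toFinite _)
    exact_mod_cast h'.ge
  · intro h v hv
    rw [h v hv]

lemma consistent_mono {f : A → U → V} {C : Finset A} {d : U → V} {α : ℝ}
    (hα : 0 < α) {R S : Finset A} (hRS : R ⊆ S) (hSC : S ⊆ C)
    (h : LowerConsistent f C d α R) : LowerConsistent f C d α S := by
  rw [lowerConsistent_iff hα (hRS.trans hSC)] at h
  rw [lowerConsistent_iff hα hSC]
  intro v hv
  apply Set.Subset.antisymm
  · exact (lowerA_mono hSC _).trans (lowerA_aprLow_self f C α _).subset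
  · intro x hx
    exact lowerA_mono hRS _ ((h v hv).symm ▸ hx)

lemma exists_reduct_subset {f : A → U → V} {C : Finset A} {d : U → V} {α : ℝ}
    [DecidableEq A] (S : Finset A) (hS : LowerConsistent f C d α S) :
    ∃ R ⊆ S, LowerConsistent f C d α R ∧ ∀ R' ⊂ R, ¬ LowerConsistent f C d α R' := by
  induction S using Finset.strongInductionOn with
  | _ S ih =>
    by_cases h : ∀ R' ⊂ S, ¬ LowerConsistent f C d α R'
    · exact ⟨S, subset_rfl, hS, h⟩
    · push_neg at h
      obtain ⟨R', hR'S, hR'⟩ := h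
      obtain ⟨R, hRR', hR⟩ := ih R' hR'S hR'
      exact ⟨R, hRR'.trans hR'S.subset, hR⟩

end Aux

theorem mem_lower_core_iff {U V A : Type*} [Fintype U] [Nonempty U]
    [DecidableEq V] [DecidableEq A] (f : A → U → V) (C : Finset A) (d : U → V)
    (α β : ℝ) (hβ0 : 0 ≤ β) (hβα : β < α) (hα1 : α ≤ 1)
    (c : A) (hc : c ∈ C) :
    (∀ R ⊆ C, LowerReduct f C d α R → c ∈ R) ↔
      eta f C d α (C.erase c) ≠ eta f C d α C := by
  have hα : 0 < α := lt_of_le_of_lt hβ0 hβα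
  have hEC : eta f C d α (C.erase c) = eta f C d α C ↔
      LowerConsistent f C d α (C.erase c) :=
    (eta_eq_iff (Finset.erase_subset c C)).trans
      (lowerConsistent_iff hα (Finset.erase_subset c C)).symm
  constructor
  · intro hcore heq
    have hcons := hEC.mp (not_not.mp (fun h => h heq))
    obtain ⟨R, hRS, hR1, hR2⟩ := exists_reduct_subset (C.erase c) hcons
    have hcR := hcore R (hRS.trans (Finset.erase_subset c C)) ⟨hR1, hR2⟩
    exact (Finset.mem_erase.mp (hRS hcR)).1 rfl
  · intro hne R hRC hRed
    by_contra hcR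
    have hRe : R ⊆ C.erase c := fun a ha =>
      Finset.mem_erase.mpr ⟨fun h => hcR (h ▸ ha), hRC ha⟩
    exact hne (hEC.mpr (consistent_mono hα hRe (Finset.erase_subset c C) hRed.1))
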